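/- If R formed as the signed V-flip on E = V ⊗ W (sign ε, dim V = p, dim W = q) is used to define the Yang-Baxter character, then the normalized trace of ρ_R of the n-cycle equals ε^{n−1}/p^{n−1}; hence its Thoma parameters are α₁ = … = α_p = 1/p, β = 0 when ε = +1, and α = 0, β₁ = … = β_p = 1/p when ε = −1 (checking the Thoma formula χ(cₙ) = Σᵢ αᵢⁿ + (−1)^{n−1} βᵢⁿ). -/

import Mathlib

/-- The matrix of the signed `V`-flip `R`-matrix acting on legs `i, i+1` of
`E^{⊗n}`, where `E = V ⊗ W` with `dim V = p`, `dim W = q`, realized on the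
standard basis indexed by `Fin n → Fin p × Fin q`:
`R((v₁⊗w₁)⊗(v₂⊗w₂)) = ε (v₂⊗w₁)⊗(v₁⊗w₂)` (V-components at legs `i, i+1` are
swapped, all W-components and the other V-components are fixed). -/
def Rmat (p q n : ℕ) (ε : ℂ) (i : ℕ) :
    Matrix (Fin n → Fin p × Fin q) (Fin n → Fin p × Fin q) ℂ :=
  fun f g =>
    if (∀ k : Fin n, (f k).2 = (g k).2) ∧
        (∀ k : Fin n, k.val ≠ i → k.val ≠ i + 1 → (f k).1 = (g k).1) ∧
        (∀ k l : Fin n, k.val = i → l.val = i + 1 → (f k).1 = (g l).1 ∧ (f l).1 = (g k).1)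
      then ε else 0

/-! Each factor `ρ_R(σᵢ)` is `ε` times the permutation matrix of the basis permutation that swaps
the `V`-labels of legs `i` and `i + 1`, so `ρ_R(cₙ)` is `ε^{n-1}` times the permutation matrix that
rotates the `V`-labels along the `n`-cycle. The trace of a permutation matrix counts fixed basis
vectors, and a basis vector is fixed exactly when its `V`-labels are constant along the cycle:
there are `p qⁿ` of them, so `χ_R(cₙ) = ε^{n-1} p qⁿ / (pq)ⁿ = ε^{n-1} / p^{n-1}`. -/

open Equiv Function

namespace Fin

theorem coe_cycleRange_apply {n : ℕ} (i j : Fin n) :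
    (cycleRange j i : ℕ) = if (i : ℕ) < j then (i : ℕ) + 1 else if (i : ℕ) = j then 0 else i := by
  rcases lt_trichotomy i j with h | rfl | h
  · simp [coe_cycleRange_of_lt h, h]
  · simp [coe_cycleRange_of_le le_rfl]
  · simp [cycleRange_of_gt h, Fin.lt_def.mp h |>.not_gt, Fin.val_ne_of_ne h.ne']

theorem cycleRange_mul_swap {n : ℕ} (m : ℕ) (hm : m + 1 < n) :
    cycleRange ⟨m, by omega⟩ * swap ⟨m, by omega⟩ ⟨m + 1, hm⟩ = cycleRange ⟨m + 1, hm⟩ := by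
  ext x
  simp only [Perm.mul_apply, coe_cycleRange_apply, swap_apply_def, Fin.ext_iff]
  split_ifs <;> simp_all <;> omega

end Fin

theorem Equiv.Perm.SameCycle.apply_eq_of_comp_eq {ι α : Type*} [Finite ι] {σ : Perm ι}
    {g : ι → α} (hg : g ∘ σ = g) {x y : ι} (h : σ.SameCycle x y) : g x = g y := by
  obtain ⟨i, -, rfl⟩ := h.exists_pow_eq'
  rw [Perm.coe_pow]
  exact (congrFun (iterate_invariant hg i) x).symm

theorem sameCycle_finRotate {n : ℕ} (hn : 2 ≤ n) (x y : Fin n) : (finRotate n).SameCycle x y :=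
  (isCycle_finRotate_of_le hn).sameCycle (Perm.mem_support.mp (by simp [support_finRotate_of_le hn]))
    (Perm.mem_support.mp (by simp [support_finRotate_of_le hn]))

def adjSwap (n i : ℕ) : Perm (Fin n) :=
  if h : i + 1 < n then swap ⟨i, by omega⟩ ⟨i + 1, h⟩ else 1

theorem prod_map_adjSwap_range {n m : ℕ} (hm : m < n) :
    ((List.range m).map (adjSwap n)).prod = Fin.cycleRange ⟨m, hm⟩ := by
  induction m with
  | zero => simp [Fin.cycleRange_mk_zero]
  | succ m ih =>
    rw [List.range_succ, List.map_append, List.prod_append, ih (by omega), List.map_singleton,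
      List.prod_singleton, adjSwap, dif_pos hm, Fin.cycleRange_mul_swap]

theorem prod_map_adjSwap_eq_finRotate (n : ℕ) :
    ((List.range (n - 1)).map (adjSwap n)).prod = finRotate n := by
  rcases n with _ | n
  · rfl
  · exact (prod_map_adjSwap_range (Nat.lt_succ_self n)).trans (Fin.cycleRange_last n)

section PermuteFst

variable {ι α β : Type*}

/-- On the basis `ι → α × β` of `(A ⊗ B)^{⊗ι}`, the permutation `σ` of the legs applied to the
`A`-factors only. -/
def permuteFst (σ : Perm ι) : Perm (ι → α × β) where
  toFun f k := ((f (σ k)).1, (f k).2)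
  invFun f k := ((f (σ.symm k)).1, (f k).2)
  left_inv f := by ext k <;> simp
  right_inv f := by ext k <;> simp

theorem permuteFst_mul (σ τ : Perm ι) :
    permuteFst (σ * τ) = (permuteFst τ * permuteFst σ : Perm (ι → α × β)) :=
  rfl

theorem isFixedPt_permuteFst_iff {σ : Perm ι} {f : ι → α × β} :
    IsFixedPt (permuteFst σ) f ↔ (Prod.fst ∘ f) ∘ σ = Prod.fst ∘ f := by
  simp [IsFixedPt, permuteFst, funext_iff, Prod.ext_iff]

theorem ncard_fixedPoints_permuteFst [Finite ι] [Nonempty ι] {σ : Perm ι}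
    (hσ : ∀ x y, σ.SameCycle x y) :
    (fixedPoints (permuteFst σ : Perm (ι → α × β))).ncard
      = Nat.card α * Nat.card β ^ Nat.card ι := by
  obtain ⟨k₀⟩ := ‹Nonempty ι›
  have hrange : fixedPoints (permuteFst σ : Perm (ι → α × β))
      = Set.range fun x : α × (ι → β) => fun k => (x.1, x.2 k) := by
    ext f
    rw [mem_fixedPoints, isFixedPt_permuteFst_iff]
    constructor
    · exact fun hf => ⟨((f k₀).1, Prod.snd ∘ f), funext fun k =>
        Prod.ext ((hσ k₀ k).apply_eq_of_comp_eq hf) rfl⟩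
    · rintro ⟨x, rfl⟩
      rfl
  have hinj : Injective fun x : α × (ι → β) => fun k => (x.1, x.2 k) := fun x y hxy => by
    simp only [funext_iff, Prod.ext_iff] at hxy
    exact Prod.ext (hxy k₀).1 (funext fun k => (hxy k).2)
  rw [hrange, Set.ncard_range_of_injective hinj, Nat.card_prod, Nat.card_fun]

variable (R : Type*) [NonAssocSemiring R] [Fintype ι] [DecidableEq ι]
  [Fintype α] [DecidableEq α] [Fintype β] [DecidableEq β]

def permuteFstMatrixHom : Perm ι →* Matrix (ι → α × β) (ι → α × β) R where
  toFun σ := (permuteFst σ).permMatrix R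
  map_one' := Matrix.permMatrix_one
  map_mul' σ τ := by rw [permuteFst_mul, Matrix.permMatrix_mul]

end PermuteFst

theorem Rmat_eq_smul_permMatrix {p q n : ℕ} (ε : ℂ) {i : ℕ} (hi : i + 1 < n) :
    Rmat p q n ε i = ε • (permuteFst (adjSwap n i)).permMatrix ℂ := by
  ext f g
  simp only [Rmat, Matrix.smul_apply, PEquiv.toMatrix_apply, toPEquiv_apply, Option.mem_def,
    Option.some.injEq, adjSwap, dif_pos hi, smul_eq_mul, mul_ite, mul_one, mul_zero]
  congr 1
  simp only [permuteFst, coe_fn_mk, funext_iff, Prod.ext_iff, swap_apply_def, Fin.ext_iff]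
  apply propext
  constructor
  · rintro ⟨h2, h1, h12⟩ k
    refine ⟨?_, h2 k⟩
    have := h12 ⟨i, by omega⟩ ⟨i + 1, hi⟩ rfl rfl
    split_ifs with hk hk' <;> grind
  · intro h
    refine ⟨fun k => (h k).2, fun k hk hk' => ?_, fun k l hk hl => ?_⟩
    · simpa [hk, hk'] using (h k).1
    · have hk' : (⟨i, by omega⟩ : Fin n) = k := Fin.ext hk.symm
      have hl' : (⟨i + 1, hi⟩ : Fin n) = l := Fin.ext hl.symm
      have hfk := (h k).1
      have hfl := (h l).1
      simp only [hk, hl, hk', hl', if_true, add_eq_left, one_ne_zero, if_false] at hfk hfl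
      exact ⟨hfl, hfk⟩

theorem prod_map_Rmat (p q n : ℕ) (ε : ℂ) :
    ((List.range (n - 1)).map (Rmat p q n ε)).prod
      = ε ^ (n - 1) • (permuteFst (finRotate n)).permMatrix ℂ := by
  have hR : (List.range (n - 1)).map (Rmat p q n ε)
      = (((List.range (n - 1)).map (adjSwap n)).map (permuteFstMatrixHom ℂ)).map (ε • ·) := by
    simp only [List.map_map]
    exact List.map_congr_left fun i hi => Rmat_eq_smul_permMatrix ε (by simp at hi; omega)
  rw [hR, ← List.smul_prod, List.length_map, List.length_map,
    List.length_range, ← map_list_prod, prod_map_adjSwap_eq_finRotate]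
  rfl

theorem trace_prod_map_Rmat {p q n : ℕ} (hn : 2 ≤ n) (ε : ℂ) :
    ((List.range (n - 1)).map (Rmat p q n ε)).prod.trace = ε ^ (n - 1) * (p * q ^ n) := by
  have : NeZero n := ⟨by omega⟩
  rw [prod_map_Rmat, Matrix.trace_smul, Matrix.trace_permutation,
    ncard_fixedPoints_permuteFst (sameCycle_finRotate hn)]
  simp

theorem stmt19_general (p q n : ℕ) (hp : 0 < p) (hq : 0 < q) (hn : 2 ≤ n) (ε : ℂ) :
    Matrix.trace (((List.range (n - 1)).map (Rmat p q n ε)).prod) / ((p : ℂ) * q) ^ n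
        = ε ^ (n - 1) / (p : ℂ) ^ (n - 1) ∧
      (ε = 1 →
        Matrix.trace (((List.range (n - 1)).map (Rmat p q n ε)).prod) / ((p : ℂ) * q) ^ n
          = ∑ _i : Fin p, ((1 : ℂ) / p) ^ n) ∧
      (ε = -1 →
        Matrix.trace (((List.range (n - 1)).map (Rmat p q n ε)).prod) / ((p : ℂ) * q) ^ n
          = (-1 : ℂ) ^ (n - 1) * ∑ _i : Fin p, ((1 : ℂ) / p) ^ n) := by
  have hp' : (p : ℂ) ≠ 0 := by exact_mod_cast hp.ne'
  have hq' : (q : ℂ) ≠ 0 := by exact_mod_cast hq.ne'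
  have hpow : (p : ℂ) ^ n = p ^ (n - 1) * p := by rw [← pow_succ, Nat.sub_add_cancel (by omega)]
  have hχ : Matrix.trace (((List.range (n - 1)).map (Rmat p q n ε)).prod) / ((p : ℂ) * q) ^ n
      = ε ^ (n - 1) / (p : ℂ) ^ (n - 1) := by
    rw [trace_prod_map_Rmat hn, mul_pow, hpow, mul_assoc,
      mul_div_mul_right _ _ (mul_ne_zero hp' (pow_ne_zero n hq'))]
  have hThoma : ∑ _i : Fin p, ((1 : ℂ) / p) ^ n = ((p : ℂ) ^ (n - 1))⁻¹ := by
    rw [Finset.sum_const, Finset.card_univ, Fintype.card_fin, nsmul_eq_mul, one_div_pow,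
      mul_one_div, hpow, div_mul_cancel_right₀ hp']
  refine ⟨hχ, fun h => ?_, fun h => ?_⟩ <;> rw [hχ, hThoma, h]
  · rw [one_pow, one_div]
  · rw [div_eq_mul_inv]

/-- For `R` the `ε`-signed `V`-flip `R`-matrix (`dim V = p`, `dim W = q`), the
normalized trace of the Yang-Baxter representation of the `n`-cycle equals
`ε^{n−1}/p^{n−1}`; hence the Thoma parameters are `α₁ = ⋯ = α_p = 1/p, β = 0` when
`ε = 1`, and `α = 0, β₁ = ⋯ = β_p = 1/p` when `ε = −1`, as checked against Thoma's
formula `χ(cₙ) = Σᵢ αᵢⁿ + (−1)^{n−1} Σᵢ βᵢⁿ`. -/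
theorem stmt19 (p q n : ℕ) (hp : 0 < p) (hq : 0 < q) (hn : 2 ≤ n) (ε : ℂ)
    (hε : ε = 1 ∨ ε = -1) :
    Matrix.trace (((List.range (n - 1)).map (Rmat p q n ε)).prod) / ((p : ℂ) * q) ^ n
        = ε ^ (n - 1) / (p : ℂ) ^ (n - 1) ∧
      (ε = 1 →
        Matrix.trace (((List.range (n - 1)).map (Rmat p q n ε)).prod) / ((p : ℂ) * q) ^ n
          = ∑ _i : Fin p, ((1 : ℂ) / p) ^ n) ∧
      (ε = -1 →
        Matrix.trace (((List.range (n - 1)).map (Rmat p q n ε)).prod) / ((p : ℂ) * q) ^ n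
          = (-1 : ℂ) ^ (n - 1) * ∑ _i : Fin p, ((1 : ℂ) / p) ^ n) :=
  stmt19_general p q n hp hq hn ε
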